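/- arXiv:1506.03164 — 3 statements merged into one kernel-verified Lean document; each statement's English description precedes it below -/
import Mathlib

section
/- Suppose a rectangular block A ⊆ ℝ^p has edge of length h along dimension q, probability P = ∫_A f under a density f with ‖∇f‖_∞ ≤ L, and area |A|. If A is split along dimension q into a left piece of edge length h_left carrying probability γP with γ ≥ 1/2 and a right piece of edge length h_right = h − h_left, then the longer edge h* = max(h_left, h_right) satisfies h*/h ≤ 1 − (1−γ)/(1 + Lh|A|/P). -/
open MeasureTheory intervalIntegral

/-- Proposition 1: splitting an edge of length `h` of a rectangular block of
probability `P` and area `A` at a point giving the left piece probability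
fraction `γ ≥ 1/2`, the longer resulting edge `h* = max(h_left, h_right)`
satisfies `h*/h ≤ 1 − (1−γ)/(1 + L h |A| / P)`.  The marginal density `g`
along the cut dimension satisfies `∫₀^h g = P`, `∫₀^{h_left} g = γP`, and the
Lipschitz bound `|g t₁ − g t₂| ≤ L |t₁ − t₂| |A| / h`. -/
theorem longer_edge_bound (L h hleft hright P A γ : ℝ) (g : ℝ → ℝ)
    (hh : 0 < h) (hP : 0 < P) (hA : 0 < A) (hL : 0 ≤ L)
    (hγ1 : 1 / 2 ≤ γ) (hγ2 : γ < 1)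
    (hl : 0 < hleft) (hr : 0 < hright) (hsum : hleft + hright = h)
    (hg0 : ∀ t, 0 ≤ g t)
    (hgP : ∫ t in (0:ℝ)..h, g t = P)
    (hgl : ∫ t in (0:ℝ)..hleft, g t = γ * P)
    (hglip : ∀ t₁ t₂, |g t₁ - g t₂| ≤ L * |t₁ - t₂| * A / h) :
    max hleft hright / h ≤ 1 - (1 - γ) / (1 + L * h * A / P) := by
  -- g is Lipschitz, hence continuous and interval integrable
  have hcont : Continuous g := by
    have hlip : LipschitzWith (Real.toNNReal (L * A / h)) g := by
      apply LipschitzWith.of_dist_le_mul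
      intro t₁ t₂
      rw [Real.coe_toNNReal _ (by positivity), Real.dist_eq, Real.dist_eq]
      calc |g t₁ - g t₂| ≤ L * |t₁ - t₂| * A / h := hglip t₁ t₂
        _ = L * A / h * |t₁ - t₂| := by ring
    exact hlip.continuous
  have hint : ∀ a b : ℝ, IntervalIntegrable g volume a b :=
    fun a b => hcont.intervalIntegrable a b
  set B := P / h + L * A with hB
  have hBpos : 0 < B := by positivity
  -- pointwise upper bound on g on [0,h]
  have hgB : ∀ s ∈ Set.Icc (0:ℝ) h, g s ≤ B := by
    intro s hs
    have key : ∀ t ∈ Set.Icc (0:ℝ) h, g s - L * A ≤ g t := by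
      intro t ht
      have h1 : g s - g t ≤ L * |s - t| * A / h :=
        (le_abs_self _).trans (hglip s t)
      have h2 : |s - t| ≤ h := by
        rw [abs_le]
        exact ⟨by linarith [hs.1, ht.2], by linarith [hs.2, ht.1]⟩
      have h3 : L * |s - t| * A / h ≤ L * h * A / h := by
        gcongr
      have h4 : L * h * A / h = L * A := by field_simp
      linarith
    have hle : (g s - L * A) * h ≤ P := by
      have hmono : ∫ t in (0:ℝ)..h, (g s - L * A) ≤ ∫ t in (0:ℝ)..h, g t := by
        apply intervalIntegral.integral_mono_on hh.le (by simp) (hint 0 h)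
        exact fun t ht => key t ht
      rw [intervalIntegral.integral_const, hgP, smul_eq_mul, sub_zero] at hmono
      linarith [hmono, mul_comm (g s - L * A) h]
    have h5 : g s - L * A ≤ P / h := (le_div_iff₀ hh).2 hle
    rw [hB]
    linarith
  have hlh : hleft ≤ h := by linarith
  -- left piece bound
  have h1 : γ * P ≤ hleft * B := by
    rw [← hgl]
    calc ∫ t in (0:ℝ)..hleft, g t ≤ ∫ t in (0:ℝ)..hleft, B := by
          apply intervalIntegral.integral_mono_on hl.le (hint 0 hleft) (by simp)
          exact fun t ht => hgB t ⟨ht.1, ht.2.trans hlh⟩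
      _ = hleft * B := by rw [intervalIntegral.integral_const, smul_eq_mul, sub_zero]
  -- right piece probability
  have hgr : ∫ t in hleft..h, g t = (1 - γ) * P := by
    have hadd := intervalIntegral.integral_add_adjacent_intervals (hint 0 hleft) (hint hleft h)
    rw [hgl, hgP] at hadd
    linarith
  have h2 : (1 - γ) * P ≤ hright * B := by
    rw [← hgr]
    calc ∫ t in hleft..h, g t ≤ ∫ t in hleft..h, B := by
          apply intervalIntegral.integral_mono_on hlh (hint hleft h) (by simp)
          exact fun t ht => hgB t ⟨hl.le.trans ht.1, ht.2⟩
      _ = hright * B := by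
          rw [intervalIntegral.integral_const]
          rw [smul_eq_mul]
          congr 1
          linarith
  -- min bound
  set m := min hleft hright with hm
  have hmB : (1 - γ) * P ≤ m * B := by
    rcases min_cases hleft hright with ⟨he, _⟩ | ⟨he, _⟩
    · rw [hm, he]; nlinarith
    · rw [hm, he]; exact h2
  have hmax : max hleft hright = h - m := by
    rcases le_total hleft hright with hc | hc
    · simp [hm, min_eq_left hc, max_eq_right hc]; linarith
    · simp [hm, min_eq_right hc, max_eq_left hc]; linarith
  set K := L * h * A / P with hKdef
  have hKP : K * P = L * h * A := by rw [hKdef]; field_simp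
  have hK0 : 0 ≤ K := by positivity
  have hKpos : (0:ℝ) < 1 + K := by linarith
  have hBh : B * h = (1 + K) * P := by
    rw [hB]; field_simp; nlinarith [hKP]
  have step : (1 - γ) / (1 + K) ≤ m / h := by
    rw [div_le_div_iff₀ hKpos hh]
    have hstep : (1 - γ) * P * h ≤ m * B * h := by nlinarith
    nlinarith [hBh]
  rw [hmax, sub_div, div_self hh.ne']
  linarith
end

section
/- Let f^(1), …, f^(m) and f̂^(1), …, f̂^(m) be densities on Ω bounded by 2D with average total-variation error ε, i.e., (1/m)Σ_i ∫|f^(i) − f̂^(i)| ≤ ε. Let Z = ∫ Π_i f^(i) > 0 and Ẑ = ∫ Π_i f̂^(i) > 0, and define f_I = Π_i f^(i)/Z, f̂_I = Π_i f̂^(i)/Ẑ. Then ∫ |f_I − f̂_I| ≤ (2/Z) m (2D)^{m−1} ε. -/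
open MeasureTheory

lemma aux_prod_diff {ι : Type*} (s : Finset ι) (a b : ι → ℝ) (C : ℝ)
    (ha0 : ∀ i, 0 ≤ a i) (haC : ∀ i, a i ≤ C)
    (hb0 : ∀ i, 0 ≤ b i) (hbC : ∀ i, b i ≤ C) :
    C * |∏ i ∈ s, a i - ∏ i ∈ s, b i| ≤ (∑ i ∈ s, |a i - b i|) * C ^ s.card := by
  induction s using Finset.cons_induction with
  | empty => simp
  | cons j s hj ih =>
    rw [Finset.prod_cons, Finset.prod_cons, Finset.sum_cons, Finset.card_cons]
    have hC : 0 ≤ C := le_trans (ha0 j) (haC j)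
    have hpa : 0 ≤ ∏ i ∈ s, a i := Finset.prod_nonneg fun i _ => ha0 i
    have hpaC : ∏ i ∈ s, a i ≤ C ^ s.card := by
      calc ∏ i ∈ s, a i ≤ ∏ i ∈ s, C := Finset.prod_le_prod (fun i _ => ha0 i) (fun i _ => haC i)
        _ = C ^ s.card := Finset.prod_const C
    have hsum : 0 ≤ ∑ i ∈ s, |a i - b i| := Finset.sum_nonneg fun i _ => abs_nonneg _
    have hCp : (0:ℝ) ≤ C ^ s.card := pow_nonneg hC _
    have key : |a j * ∏ i ∈ s, a i - b j * ∏ i ∈ s, b i|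
        ≤ |a j - b j| * ∏ i ∈ s, a i + b j * |∏ i ∈ s, a i - ∏ i ∈ s, b i| := by
      have : a j * ∏ i ∈ s, a i - b j * ∏ i ∈ s, b i
          = (a j - b j) * ∏ i ∈ s, a i + b j * (∏ i ∈ s, a i - ∏ i ∈ s, b i) := by ring
      rw [this]
      calc _ ≤ |(a j - b j) * ∏ i ∈ s, a i| + |b j * (∏ i ∈ s, a i - ∏ i ∈ s, b i)| :=
            abs_add_le _ _
        _ = |a j - b j| * ∏ i ∈ s, a i + b j * |∏ i ∈ s, a i - ∏ i ∈ s, b i| := by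
            rw [abs_mul, abs_mul, abs_of_nonneg hpa, abs_of_nonneg (hb0 j)]
    have habs : 0 ≤ |∏ i ∈ s, a i - ∏ i ∈ s, b i| := abs_nonneg _
    rw [pow_succ]
    nlinarith [mul_le_mul_of_nonneg_left key hC,
      mul_le_mul_of_nonneg_left ih (hb0 j),
      mul_le_mul_of_nonneg_right (hbC j) (mul_nonneg hsum hCp),
      mul_le_mul_of_nonneg_left hpaC (mul_nonneg (abs_nonneg (a j - b j)) hC)]

/-- One-stage aggregation (Theorem 3): if the average total-variation error of
the subset approximations is `ε`, all densities are bounded by `2D`, and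
`Z = ∫ ∏ᵢ fⁱ > 0`, `Ẑ = ∫ ∏ᵢ f̂ⁱ > 0`, then the normalized products satisfy
`∫ |f_I − f̂_I| ≤ (2/Z) m (2D)^{m−1} ε`. -/
theorem one_stage_aggregation {α : Type*} [MeasurableSpace α] (μ : Measure α)
    (m : ℕ) (D ε : ℝ) (hD : 0 < D)
    (f g : Fin m → α → ℝ)
    (hfm : ∀ i, Measurable (f i)) (hgm : ∀ i, Measurable (g i))
    (hf0 : ∀ i x, 0 ≤ f i x) (hg0 : ∀ i x, 0 ≤ g i x)
    (hfD : ∀ i x, f i x ≤ 2 * D) (hgD : ∀ i x, g i x ≤ 2 * D)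
    (hf1 : ∀ i, ∫ x, f i x ∂μ = 1) (hg1 : ∀ i, ∫ x, g i x ∂μ = 1)
    (Z Zhat : ℝ)
    (hZ : Z = ∫ x, ∏ i, f i x ∂μ) (hZpos : 0 < Z)
    (hZhat : Zhat = ∫ x, ∏ i, g i x ∂μ) (hZhatpos : 0 < Zhat)
    (hε : (1 / (m : ℝ)) * ∑ i, ∫ x, |f i x - g i x| ∂μ ≤ ε) :
    ∫ x, |(∏ i, f i x) / Z - (∏ i, g i x) / Zhat| ∂μ
      ≤ (2 / Z) * m * (2 * D) ^ (m - 1) * ε := by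
  rcases Nat.eq_zero_or_pos m with hm | hm
  · subst hm
    have hZZ : Z = Zhat := by rw [hZ, hZhat]; congr 1
    simp [hZZ]
  -- main case : m ≥ 1
  set C := 2 * D with hCdef
  have hC : 0 < C := by positivity
  have hmR : (0:ℝ) < m := by exact_mod_cast hm
  set i0 : Fin m := ⟨0, hm⟩ with hi0
  -- integrability of the individual densities
  have hfi : ∀ i, Integrable (f i) μ := by
    intro i; by_contra h
    have := hf1 i; rw [integral_undef h] at this; norm_num at this
  have hgi : ∀ i, Integrable (g i) μ := by
    intro i; by_contra h
    have := hg1 i; rw [integral_undef h] at this; norm_num at this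
  set F : α → ℝ := fun x => ∏ i, f i x with hFdef
  set G : α → ℝ := fun x => ∏ i, g i x with hGdef
  have hFm : Measurable F := Finset.measurable_prod _ fun i _ => hfm i
  have hGm : Measurable G := Finset.measurable_prod _ fun i _ => hgm i
  have hF0 : ∀ x, 0 ≤ F x := fun x => Finset.prod_nonneg fun i _ => hf0 i x
  have hG0 : ∀ x, 0 ≤ G x := fun x => Finset.prod_nonneg fun i _ => hg0 i x
  have hcard : (Finset.univ.erase i0).card = m - 1 := by
    rw [Finset.card_erase_of_mem (Finset.mem_univ i0), Finset.card_univ, Fintype.card_fin]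
  have hFle : ∀ x, F x ≤ C ^ (m - 1) * f i0 x := by
    intro x
    have h1 : F x = f i0 x * ∏ i ∈ Finset.univ.erase i0, f i x :=
      (Finset.mul_prod_erase Finset.univ (fun i => f i x) (Finset.mem_univ i0)).symm
    have h2 : ∏ i ∈ Finset.univ.erase i0, f i x ≤ C ^ (m - 1) := by
      rw [← hcard]
      calc ∏ i ∈ Finset.univ.erase i0, f i x ≤ ∏ i ∈ Finset.univ.erase i0, C :=
            Finset.prod_le_prod (fun i _ => hf0 i x) (fun i _ => hfD i x)
        _ = C ^ (Finset.univ.erase i0).card := Finset.prod_const C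
    calc F x = f i0 x * ∏ i ∈ Finset.univ.erase i0, f i x := h1
      _ ≤ f i0 x * C ^ (m - 1) := by
          exact mul_le_mul_of_nonneg_left h2 (hf0 i0 x)
      _ = C ^ (m - 1) * f i0 x := mul_comm _ _
  have hGle : ∀ x, G x ≤ C ^ (m - 1) * g i0 x := by
    intro x
    have h1 : G x = g i0 x * ∏ i ∈ Finset.univ.erase i0, g i x :=
      (Finset.mul_prod_erase Finset.univ (fun i => g i x) (Finset.mem_univ i0)).symm
    have h2 : ∏ i ∈ Finset.univ.erase i0, g i x ≤ C ^ (m - 1) := by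
      rw [← hcard]
      calc ∏ i ∈ Finset.univ.erase i0, g i x ≤ ∏ i ∈ Finset.univ.erase i0, C :=
            Finset.prod_le_prod (fun i _ => hg0 i x) (fun i _ => hgD i x)
        _ = C ^ (Finset.univ.erase i0).card := Finset.prod_const C
    calc G x = g i0 x * ∏ i ∈ Finset.univ.erase i0, g i x := h1
      _ ≤ g i0 x * C ^ (m - 1) := mul_le_mul_of_nonneg_left h2 (hg0 i0 x)
      _ = C ^ (m - 1) * g i0 x := mul_comm _ _
  have hFint : Integrable F μ := by
    refine Integrable.mono' ((hfi i0).const_mul (C ^ (m - 1)))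
      hFm.aestronglyMeasurable (ae_of_all _ fun x => ?_)
    rw [Real.norm_eq_abs, abs_of_nonneg (hF0 x)]; exact hFle x
  have hGint : Integrable G μ := by
    refine Integrable.mono' ((hgi i0).const_mul (C ^ (m - 1)))
      hGm.aestronglyMeasurable (ae_of_all _ fun x => ?_)
    rw [Real.norm_eq_abs, abs_of_nonneg (hG0 x)]; exact hGle x
  -- pointwise product-difference bound
  have hpowC : C ^ m = C ^ (m - 1) * C := by
    rw [← pow_succ, Nat.sub_add_cancel hm]
  have ptw : ∀ x, |F x - G x| ≤ (∑ i, |f i x - g i x|) * C ^ (m - 1) := by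
    intro x
    have haux := aux_prod_diff Finset.univ (fun i => f i x) (fun i => g i x) C
      (fun i => hf0 i x) (fun i => hfD i x) (fun i => hg0 i x) (fun i => hgD i x)
    rw [Finset.card_univ, Fintype.card_fin] at haux
    have h2 : C * |F x - G x| ≤ C * ((∑ i, |f i x - g i x|) * C ^ (m - 1)) := by
      calc C * |F x - G x| ≤ (∑ i, |f i x - g i x|) * C ^ m := haux
        _ = C * ((∑ i, |f i x - g i x|) * C ^ (m - 1)) := by rw [hpowC]; ring
    exact le_of_mul_le_mul_left h2 hC
  -- integral versions
  have hsubint : Integrable (fun x => |F x - G x|) μ := (hFint.sub hGint).abs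
  have hsumint : Integrable (fun x => (∑ i, |f i x - g i x|) * C ^ (m - 1)) μ :=
    (integrable_finset_sum Finset.univ fun i _ => ((hfi i).sub (hgi i)).abs).mul_const _
  set S : ℝ := ∑ i, ∫ x, |f i x - g i x| ∂μ with hSdef
  have key1 : ∫ x, |F x - G x| ∂μ ≤ S * C ^ (m - 1) := by
    calc ∫ x, |F x - G x| ∂μ ≤ ∫ x, (∑ i, |f i x - g i x|) * C ^ (m - 1) ∂μ :=
          integral_mono hsubint hsumint ptw
      _ = (∫ x, ∑ i, |f i x - g i x| ∂μ) * C ^ (m - 1) := integral_mul_const _ _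
      _ = S * C ^ (m - 1) := by
          rw [integral_finset_sum Finset.univ (f := fun i x => |f i x - g i x|)
            (fun i _ => ((hfi i).sub (hgi i)).abs)]
  have hS : S ≤ m * ε := by
    have : (1 / (m : ℝ)) * S ≤ ε := hε
    calc S = m * ((1 / (m : ℝ)) * S) := by field_simp
      _ ≤ m * ε := mul_le_mul_of_nonneg_left this (le_of_lt hmR)
  have hSnn : 0 ≤ S := Finset.sum_nonneg fun i _ =>
    integral_nonneg fun x => abs_nonneg _
  have hεnn : 0 ≤ ε := le_trans (by positivity) hε
  have keyZ : |Zhat - Z| ≤ ∫ x, |F x - G x| ∂μ := by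
    have h1 : Zhat - Z = ∫ x, (G x - F x) ∂μ := by
      rw [hZ, hZhat, integral_sub hGint hFint]
    rw [h1]
    calc |∫ x, (G x - F x) ∂μ| = ‖∫ x, (G x - F x) ∂μ‖ := (Real.norm_eq_abs _).symm
      _ ≤ ∫ x, ‖G x - F x‖ ∂μ := norm_integral_le_integral_norm _
      _ = ∫ x, |F x - G x| ∂μ := by
          congr 1; funext x; rw [Real.norm_eq_abs, abs_sub_comm]
  -- pointwise decomposition bound
  have hZne : Z ≠ 0 := ne_of_gt hZpos
  have hZhatne : Zhat ≠ 0 := ne_of_gt hZhatpos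
  have ptw2 : ∀ x, |F x / Z - G x / Zhat|
      ≤ |F x - G x| / Z + G x * (|Zhat - Z| / (Z * Zhat)) := by
    intro x
    have hdec : F x / Z - G x / Zhat = (F x - G x) / Z + G x * ((Zhat - Z) / (Z * Zhat)) := by
      field_simp; ring
    rw [hdec]
    calc _ ≤ |(F x - G x) / Z| + |G x * ((Zhat - Z) / (Z * Zhat))| := abs_add_le _ _
      _ = |F x - G x| / Z + G x * (|Zhat - Z| / (Z * Zhat)) := by
          rw [abs_div, abs_mul, abs_div, abs_of_pos hZpos, abs_of_nonneg (hG0 x),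
            abs_of_pos (mul_pos hZpos hZhatpos)]
  have hlhsint : Integrable (fun x => |F x / Z - G x / Zhat|) μ :=
    ((hFint.div_const Z).sub (hGint.div_const Zhat)).abs
  have hrhsint : Integrable
      (fun x => |F x - G x| / Z + G x * (|Zhat - Z| / (Z * Zhat))) μ :=
    (hsubint.div_const Z).add (hGint.mul_const _)
  have step : ∫ x, |F x / Z - G x / Zhat| ∂μ
      ≤ (∫ x, |F x - G x| ∂μ) / Z + Zhat * (|Zhat - Z| / (Z * Zhat)) := by
    calc ∫ x, |F x / Z - G x / Zhat| ∂μ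
        ≤ ∫ x, (|F x - G x| / Z + G x * (|Zhat - Z| / (Z * Zhat))) ∂μ :=
          integral_mono hlhsint hrhsint ptw2
      _ = (∫ x, |F x - G x| ∂μ) / Z + (∫ x, G x ∂μ) * (|Zhat - Z| / (Z * Zhat)) := by
          rw [integral_add (hsubint.div_const Z) (hGint.mul_const _),
            integral_div, integral_mul_const]
      _ = (∫ x, |F x - G x| ∂μ) / Z + Zhat * (|Zhat - Z| / (Z * Zhat)) := by
          rw [← hZhat]
  have hsimp : Zhat * (|Zhat - Z| / (Z * Zhat)) = |Zhat - Z| / Z := by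
    field_simp
  rw [hsimp] at step
  -- conclude
  have hB : ∫ x, |F x - G x| ∂μ ≤ m * ε * C ^ (m - 1) :=
    le_trans key1 (mul_le_mul_of_nonneg_right hS (by positivity))
  have hB2 : |Zhat - Z| ≤ m * ε * C ^ (m - 1) := le_trans keyZ hB
  have final : ∫ x, |F x / Z - G x / Zhat| ∂μ
      ≤ 2 * (m * ε * C ^ (m - 1)) / Z := by
    have h1 : (∫ x, |F x - G x| ∂μ) / Z ≤ (m * ε * C ^ (m - 1)) / Z :=
      by gcongr
    have h2 : |Zhat - Z| / Z ≤ (m * ε * C ^ (m - 1)) / Z :=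
      by gcongr
    calc ∫ x, |F x / Z - G x / Zhat| ∂μ
        ≤ (∫ x, |F x - G x| ∂μ) / Z + |Zhat - Z| / Z := step
      _ ≤ (m * ε * C ^ (m - 1)) / Z + (m * ε * C ^ (m - 1)) / Z := add_le_add h1 h2
      _ = 2 * (m * ε * C ^ (m - 1)) / Z := by ring
  calc ∫ x, |F x / Z - G x / Zhat| ∂μ ≤ 2 * (m * ε * C ^ (m - 1)) / Z := final
    _ = (2 / Z) * m * C ^ (m - 1) * ε := by ring
end

section
/- Let f, g, f̂, ĝ be probability densities on Ω bounded above by 2D, with ∫|f−f̂| ≤ δ₁ and ∫|g−ĝ| ≤ δ₂, and suppose ∫ fg > 0 and ∫ f̂ĝ > 0. Then the normalized products satisfy ∫ | fg/∫fg − f̂ĝ/∫f̂ĝ | ≤ (2/∫fg) · (2D) · (δ₁ + δ₂). -/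
open MeasureTheory

/-! Write `u = fg`, `v = f̂ĝ`, `Z = ∫ u`, `W = ∫ v`. Splitting
`u/Z - v/W = (u - v)/Z + v (1/Z - 1/W)` and integrating gives
`∫ |u/Z - v/W| ≤ (∫ |u - v| + |W - Z|)/Z ≤ 2 ∫ |u - v| / Z`.
Finally `fg - f̂ĝ = (f - f̂) g + f̂ (g - ĝ)`, and `g`, `f̂` are bounded by `2D`. -/

lemma abs_mul_sub_mul_le (a b c d : ℝ) :
    |a * b - c * d| ≤ |a - c| * |b| + |c| * |b - d| :=
  calc |a * b - c * d| = |(a - c) * b + c * (b - d)| := by ring_nf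
    _ ≤ |(a - c) * b| + |c * (b - d)| := abs_add_le _ _
    _ = |a - c| * |b| + |c| * |b - d| := by rw [abs_mul, abs_mul]

lemma mul_abs_inv_sub_inv_le {z w : ℝ} (hz : 0 < z) (hw : 0 ≤ w) :
    w * |z⁻¹ - w⁻¹| ≤ |w - z| / z := by
  rcases hw.eq_or_lt with rfl | hw
  · simp only [zero_mul]
    positivity
  · refine le_of_eq ?_
    rw [inv_sub_inv hz.ne' hw.ne', abs_div, abs_of_pos (mul_pos hz hw)]
    field_simp

section

variable {α : Type*} [MeasurableSpace α] {μ : Measure α}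

lemma integral_abs_mul_sub_mul_le {f g f' g' : α → ℝ} {C : ℝ}
    (hf : Integrable f μ) (hg : Integrable g μ) (hf' : Integrable f' μ) (hg' : Integrable g' μ)
    (hgC : ∀ x, |g x| ≤ C) (hf'C : ∀ x, |f' x| ≤ C) :
    ∫ x, |f x * g x - f' x * g' x| ∂μ
      ≤ C * (∫ x, |f x - f' x| ∂μ + ∫ x, |g x - g' x| ∂μ) := by
  have hdf : Integrable (fun x => C * |f x - f' x|) μ := ((hf.sub hf').abs).const_mul C
  have hdg : Integrable (fun x => C * |g x - g' x|) μ := ((hg.sub hg').abs).const_mul C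
  have hpt : ∀ x, |f x * g x - f' x * g' x| ≤ C * |f x - f' x| + C * |g x - g' x| := fun x =>
    calc |f x * g x - f' x * g' x| ≤ |f x - f' x| * |g x| + |f' x| * |g x - g' x| :=
          abs_mul_sub_mul_le _ _ _ _
      _ ≤ |f x - f' x| * C + C * |g x - g' x| :=
          add_le_add (mul_le_mul_of_nonneg_left (hgC x) (abs_nonneg _))
            (mul_le_mul_of_nonneg_right (hf'C x) (abs_nonneg _))
      _ = C * |f x - f' x| + C * |g x - g' x| := by rw [mul_comm]
  calc ∫ x, |f x * g x - f' x * g' x| ∂μ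
      ≤ ∫ x, (C * |f x - f' x| + C * |g x - g' x|) ∂μ :=
        integral_mono_of_nonneg (ae_of_all _ fun _ => abs_nonneg _) (hdf.add hdg) (ae_of_all _ hpt)
    _ = C * (∫ x, |f x - f' x| ∂μ + ∫ x, |g x - g' x| ∂μ) := by
        rw [integral_add hdf hdg, integral_const_mul, integral_const_mul, mul_add]

lemma integral_abs_div_integral_sub_div_integral_le {u v : α → ℝ}
    (hu : Integrable u μ) (hv : Integrable v μ) (hv0 : ∀ x, 0 ≤ v x)
    (hZ : 0 < ∫ x, u x ∂μ) :
    ∫ x, |u x / (∫ y, u y ∂μ) - v x / (∫ y, v y ∂μ)| ∂μ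
      ≤ 2 / (∫ y, u y ∂μ) * ∫ x, |u x - v x| ∂μ := by
  set Z := ∫ y, u y ∂μ
  set W := ∫ y, v y ∂μ
  set A := ∫ x, |u x - v x| ∂μ
  have hWZ : |W - Z| ≤ A := by
    rw [← integral_sub hv hu]
    calc |∫ x, (v x - u x) ∂μ| ≤ ∫ x, |v x - u x| ∂μ := abs_integral_le_integral_abs
      _ = A := by simp_rw [abs_sub_comm]; rfl
  have hpt : ∀ x, |u x / Z - v x / W| ≤ |u x - v x| / Z + v x * |Z⁻¹ - W⁻¹| := fun x =>
    calc |u x / Z - v x / W| = |(u x - v x) / Z + v x * (Z⁻¹ - W⁻¹)| := by ring_nf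
      _ ≤ |(u x - v x) / Z| + |v x * (Z⁻¹ - W⁻¹)| := abs_add_le _ _
      _ = |u x - v x| / Z + v x * |Z⁻¹ - W⁻¹| := by
          rw [abs_div, abs_of_pos hZ, abs_mul, abs_of_nonneg (hv0 x)]
  have hdiff : Integrable (fun x => |u x - v x| / Z) μ := ((hu.sub hv).abs).div_const Z
  have hvZW := hv.mul_const |Z⁻¹ - W⁻¹|
  calc ∫ x, |u x / Z - v x / W| ∂μ
      ≤ ∫ x, (|u x - v x| / Z + v x * |Z⁻¹ - W⁻¹|) ∂μ :=
        integral_mono_of_nonneg (ae_of_all _ fun _ => abs_nonneg _) (hdiff.add hvZW)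
          (ae_of_all _ hpt)
    _ = A / Z + W * |Z⁻¹ - W⁻¹| := by
        rw [integral_add hdiff hvZW, integral_div, integral_mul_const]
    _ ≤ A / Z + |W - Z| / Z := by
        gcongr
        exact mul_abs_inv_sub_inv_le hZ (integral_nonneg hv0)
    _ ≤ A / Z + A / Z := by gcongr
    _ = 2 / Z * A := by ring

end

theorem pairwise_step_general {α : Type*} [MeasurableSpace α] (μ : Measure α)
    (D δ₁ δ₂ : ℝ) (hD : 0 < D)
    (f g fh gh : α → ℝ)
    (hg0 : ∀ x, 0 ≤ g x)
    (hfh0 : ∀ x, 0 ≤ fh x) (hgh0 : ∀ x, 0 ≤ gh x)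
    (hgD : ∀ x, g x ≤ 2 * D)
    (hfhD : ∀ x, fh x ≤ 2 * D)
    (hf1 : ∫ x, f x ∂μ = 1) (hg1 : ∫ x, g x ∂μ = 1)
    (hfh1 : ∫ x, fh x ∂μ = 1) (hgh1 : ∫ x, gh x ∂μ = 1)
    (h1 : ∫ x, |f x - fh x| ∂μ ≤ δ₁) (h2 : ∫ x, |g x - gh x| ∂μ ≤ δ₂)
    (hfg : 0 < ∫ x, f x * g x ∂μ) :
    ∫ x, |f x * g x / (∫ y, f y * g y ∂μ)
        - fh x * gh x / (∫ y, fh y * gh y ∂μ)| ∂μ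
      ≤ (2 / ∫ y, f y * g y ∂μ) * (2 * D) * (δ₁ + δ₂) := by
  have integrable_of_eq_one {φ : α → ℝ} (h : ∫ x, φ x ∂μ = 1) : Integrable φ μ :=
    .of_integral_ne_zero (by simp [h])
  have hf := integrable_of_eq_one hf1
  have hg := integrable_of_eq_one hg1
  have hfh := integrable_of_eq_one hfh1
  have hgh := integrable_of_eq_one hgh1
  have hgC (x : α) : |g x| ≤ 2 * D := abs_le.2 ⟨by linarith [hg0 x], hgD x⟩
  have hfhC (x : α) : |fh x| ≤ 2 * D := abs_le.2 ⟨by linarith [hfh0 x], hfhD x⟩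
  have hfg_int := hf.mul_bdd hg.aestronglyMeasurable (ae_of_all _ hgC)
  have hfhgh_int := hgh.bdd_mul hfh.aestronglyMeasurable (ae_of_all _ hfhC)
  calc _ ≤ 2 / (∫ y, f y * g y ∂μ) * ∫ x, |f x * g x - fh x * gh x| ∂μ :=
        integral_abs_div_integral_sub_div_integral_le hfg_int hfhgh_int
          (fun x => mul_nonneg (hfh0 x) (hgh0 x)) hfg
    _ ≤ 2 / (∫ y, f y * g y ∂μ) * (2 * D * (δ₁ + δ₂)) := by
        gcongr
        exact (integral_abs_mul_sub_mul_le hf hg hfh hgh hgC hfhC).trans (by gcongr)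
    _ = (2 / ∫ y, f y * g y ∂μ) * (2 * D) * (δ₁ + δ₂) := by ring

/-- Pairwise aggregation step: for densities `f, g, f̂, ĝ` bounded by `2D`
with `∫|f−f̂| ≤ δ₁` and `∫|g−ĝ| ≤ δ₂`, the normalized products satisfy
`∫ |fg/∫fg − f̂ĝ/∫f̂ĝ| ≤ (2/∫fg)(2D)(δ₁+δ₂)`. -/
theorem pairwise_step {α : Type*} [MeasurableSpace α] (μ : Measure α)
    (D δ₁ δ₂ : ℝ) (hD : 0 < D)
    (f g fh gh : α → ℝ)
    (hfm : Measurable f) (hgm : Measurable g)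
    (hfhm : Measurable fh) (hghm : Measurable gh)
    (hf0 : ∀ x, 0 ≤ f x) (hg0 : ∀ x, 0 ≤ g x)
    (hfh0 : ∀ x, 0 ≤ fh x) (hgh0 : ∀ x, 0 ≤ gh x)
    (hfD : ∀ x, f x ≤ 2 * D) (hgD : ∀ x, g x ≤ 2 * D)
    (hfhD : ∀ x, fh x ≤ 2 * D) (hghD : ∀ x, gh x ≤ 2 * D)
    (hf1 : ∫ x, f x ∂μ = 1) (hg1 : ∫ x, g x ∂μ = 1)
    (hfh1 : ∫ x, fh x ∂μ = 1) (hgh1 : ∫ x, gh x ∂μ = 1)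
    (h1 : ∫ x, |f x - fh x| ∂μ ≤ δ₁) (h2 : ∫ x, |g x - gh x| ∂μ ≤ δ₂)
    (hfg : 0 < ∫ x, f x * g x ∂μ) (hfgh : 0 < ∫ x, fh x * gh x ∂μ) :
    ∫ x, |f x * g x / (∫ y, f y * g y ∂μ)
        - fh x * gh x / (∫ y, fh y * gh y ∂μ)| ∂μ
      ≤ (2 / ∫ y, f y * g y ∂μ) * (2 * D) * (δ₁ + δ₂) :=
  pairwise_step_general μ D δ₁ δ₂ hD f g fh gh hg0 hfh0 hgh0 hgD hfhD hf1 hg1 hfh1 hgh1 h1 h2 hfg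
end
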